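/- arXiv:2409.10691 — 2 statements merged into one kernel-verified Lean document; each statement's English description precedes it below -/
import Mathlib

section
/- If w is a lattice knot (Ab(w)=0 and no proper nonempty subword has Ab = 0), then its doubling D(w) in the z-direction is again a lattice knot. -/
/-- The alphabet {x, y, z, x̄, ȳ, z̄}. -/
inductive Letter : Type
  | x | y | z | xb | yb | zb
  deriving DecidableEq, Repr

/-- Formal inverse of a letter. -/
def Letter.inv : Letter → Letter
  | .x => .xb | .xb => .x | .y => .yb | .yb => .y | .z => .zb | .zb => .z

/-- Abelianization: signed occurrence counts of x, y, z. -/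
def ab (w : List Letter) : ℤ × ℤ × ℤ :=
  ((w.count .x : ℤ) - (w.count .xb : ℤ),
   (w.count .y : ℤ) - (w.count .yb : ℤ),
   (w.count .z : ℤ) - (w.count .zb : ℤ))

/-- A word is reduced if no two adjacent letters are formal inverses. -/
def Reduced (w : List Letter) : Prop :=
  List.Chain' (fun a b => b ≠ a.inv) w

/-- A lattice knot: a reduced word with `ab w = 0` such that no proper nonempty
consecutive subword has abelianization zero.  `(w.take b).drop a` is the subword
`w[a+1..b]` in 1-indexed notation. -/
def IsKnot (w : List Letter) : Prop :=
  Reduced w ∧ ab w = 0 ∧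
    ∀ a b : ℕ, a < b → b ≤ w.length → ¬(a = 0 ∧ b = w.length) →
      ab ((w.take b).drop a) ≠ 0
/-- Doubling in the x-direction: x ↦ xx, x̄ ↦ x̄x̄. -/
def Dx (w : List Letter) : List Letter :=
  w.flatMap (fun c => if c = Letter.x ∨ c = Letter.xb then [c, c] else [c])

/-- Doubling in the z-direction: z ↦ zz, z̄ ↦ z̄z̄. -/
def Dz (w : List Letter) : List Letter :=
  w.flatMap (fun c => if c = Letter.z ∨ c = Letter.zb then [c, c] else [c])

/-!
A cut of `Dz w` either falls between the images of two letters of `w` or splits a doubled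
`z`-pair. If both ends of a subword of `Dz w` are cuts of the first kind, the subword is `Dz s`
for a subword `s` of `w`, and `ab (Dz s) = 0` iff `ab s = 0`. If exactly one end splits a pair,
the `z`-count of the subword is odd. If both do, the subword is `c · Dz s · c'`: for `c' = c` its
abelianization is that of `Dz (s c)`, and for `c' = c̄` that of `Dz s`, where `s ≠ []` because
`w` is reduced. In each case the knot property of `w` rules out a zero abelianization.
-/

lemma ab_append (u v : List Letter) : ab (u ++ v) = ab u + ab v := by
  simp only [ab, List.count_append, Prod.mk_add_mk, Prod.ext_iff]
  omega

lemma ab_singleton_add_ab_singleton_inv (c : Letter) : ab [c] + ab [c.inv] = 0 := by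
  cases c <;> decide

lemma Dz_append (u v : List Letter) : Dz (u ++ v) = Dz u ++ Dz v :=
  List.flatMap_append

lemma Dz_singleton (a : Letter) :
    Dz [a] = if a = Letter.z ∨ a = Letter.zb then [a, a] else [a] := by
  simp [Dz]

lemma Dz_cons (a : Letter) (w : List Letter) :
    Dz (a :: w) = (if a = Letter.z ∨ a = Letter.zb then [a, a] else [a]) ++ Dz w := rfl

lemma Dz_eq_nil_iff {w : List Letter} : Dz w = [] ↔ w = [] := by
  cases w with
  | nil => simp [Dz]
  | cons a w => simp only [Dz_cons, reduceCtorEq, iff_false]; split_ifs <;> simp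

lemma head?_Dz (w : List Letter) : (Dz w).head? = w.head? := by
  cases w with
  | nil => rfl
  | cons a w => rw [Dz_cons]; split_ifs <;> rfl

lemma count_Dz (c : Letter) (w : List Letter) :
    (Dz w).count c = (if c = Letter.z ∨ c = Letter.zb then 2 else 1) * w.count c := by
  induction w with
  | nil => rfl
  | cons a w ih =>
    rw [Dz_cons, List.count_append, ih]
    cases a <;> cases c <;> simp <;> ring

lemma ab_Dz (w : List Letter) : ab (Dz w) = ((ab w).1, (ab w).2.1, 2 * (ab w).2.2) := by
  simp only [ab, count_Dz, reduceCtorEq, or_self, ↓reduceIte, one_mul, or_false, Nat.cast_mul,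
    Nat.cast_ofNat, or_true, Prod.mk.injEq, true_and]
  ring

lemma ab_Dz_eq_zero_iff {w : List Letter} : ab (Dz w) = 0 ↔ ab w = 0 := by
  rw [ab_Dz]
  simp only [Prod.ext_iff, Prod.fst_zero, Prod.snd_zero]
  omega

lemma ab_Dz_append_singleton_ne_zero {c : Letter} (hc : c = Letter.z ∨ c = Letter.zb)
    (w : List Letter) : ab (Dz w ++ [c]) ≠ 0 := by
  rw [ab_append, ab_Dz]
  rcases hc with rfl | rfl <;> simp [ab, Prod.ext_iff] <;> omega

lemma ab_cons_Dz_ne_zero {c : Letter} (hc : c = Letter.z ∨ c = Letter.zb)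
    (w : List Letter) : ab (c :: Dz w) ≠ 0 := by
  rw [← List.singleton_append, ab_append, add_comm, ← ab_append]
  exact ab_Dz_append_singleton_ne_zero hc w

lemma Dz_eq_append {w l r : List Letter} (h : Dz w = l ++ r) :
    (∃ p q, w = p ++ q ∧ l = Dz p ∧ r = Dz q) ∨
      ∃ p q c, (c = Letter.z ∨ c = Letter.zb) ∧ w = p ++ c :: q ∧
        l = Dz p ++ [c] ∧ r = c :: Dz q := by
  induction w generalizing l with
  | nil =>
    obtain ⟨rfl, rfl⟩ := List.append_eq_nil_iff.1 h.symm
    exact .inl ⟨[], [], rfl, rfl, rfl⟩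
  | cons a w ih =>
    rw [← List.singleton_append, Dz_append] at h
    rcases List.append_eq_append_iff.1 h with ⟨l', rfl, hw⟩ | ⟨l', hl, rfl⟩
    · rcases ih hw with ⟨p, q, rfl, rfl, rfl⟩ | ⟨p, q, c, hc, rfl, rfl, rfl⟩
      · exact .inl ⟨a :: p, q, rfl, (Dz_append [a] p).symm, rfl⟩
      · refine .inr ⟨a :: p, q, c, hc, rfl, ?_, rfl⟩
        rw [← List.append_assoc, ← Dz_append]
        rfl
    · rcases l with _ | ⟨b, l⟩
      · obtain rfl : Dz [a] = l' := hl
        exact .inl ⟨[], a :: w, rfl, rfl, (Dz_append [a] w).symm⟩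
      rw [Dz_singleton, List.cons_append] at hl
      split_ifs at hl with hz <;> rw [List.cons.injEq] at hl <;> obtain ⟨rfl, hl⟩ := hl
      · rcases List.append_eq_singleton_iff.1 hl.symm with ⟨rfl, rfl⟩ | ⟨rfl, rfl⟩
        · exact .inr ⟨[], w, a, hz, rfl, rfl, rfl⟩
        · exact .inl ⟨[a], w, rfl, by rw [Dz_singleton, if_pos hz], rfl⟩
      · obtain ⟨rfl, rfl⟩ := List.append_eq_nil_iff.1 hl.symm
        exact .inl ⟨[a], w, rfl, by rw [Dz_singleton, if_neg hz], rfl⟩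

lemma Letter.self_ne_inv (a : Letter) : a ≠ a.inv := by
  cases a <;> decide

lemma not_reduced_append_cons_cons_inv (p t : List Letter) (c : Letter) :
    ¬Reduced (p ++ c :: c.inv :: t) := fun h =>
  have hpair : Reduced [c, c.inv] := List.IsChain.infix h ⟨p, t, by simp⟩
  List.isChain_pair.1 hpair rfl

lemma reduced_Dz {w : List Letter} (h : Reduced w) : Reduced (Dz w) := by
  induction w with
  | nil => exact h
  | cons a w ih =>
    obtain ⟨hhead, hw⟩ := List.isChain_cons.1 h
    have hcons : Reduced (a :: Dz w) := List.isChain_cons.2 ⟨by rwa [head?_Dz], ih hw⟩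
    rw [Dz_cons]
    split_ifs
    · exact List.isChain_cons_cons.2 ⟨a.self_ne_inv, hcons⟩
    · exact hcons

lemma isKnot_iff_forall_append {w : List Letter} :
    IsKnot w ↔ Reduced w ∧ ab w = 0 ∧
      ∀ p s t, w = p ++ s ++ t → s ≠ [] → p ≠ [] ∨ t ≠ [] → ab s ≠ 0 := by
  refine and_congr_right fun _ => and_congr_right fun _ => ⟨?_, ?_⟩
  · rintro h p s t rfl hs hpt
    have key := h p.length (p.length + s.length) (by simpa using List.length_pos_iff.2 hs)
      (by simp) (by simpa [or_iff_not_imp_left] using hpt)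
    rwa [← List.length_append, List.take_left', List.drop_left] at key
    rfl
  · intro h a b hab hb hab'
    refine h ((w.take b).take a) _ (w.drop b) (by simp) ?_ ?_
    · rw [← List.length_pos_iff, List.length_drop, List.length_take]
      omega
    · rw [← List.length_pos_iff, ← List.length_pos_iff, List.length_take, List.length_take,
        List.length_drop]
      omega

lemma ab_cons_Dz_append_singleton_ne_zero {p s t : List Letter} {c c' : Letter}
    (h : IsKnot (p ++ c :: (s ++ c' :: t))) (hc : c = Letter.z ∨ c = Letter.zb)
    (hc' : c' = Letter.z ∨ c' = Letter.zb) : ab (c :: (Dz s ++ [c'])) ≠ 0 := by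
  obtain ⟨hred, -, hsub⟩ := isKnot_iff_forall_append.1 h
  have hp : p ++ [c] ≠ [] := by simp
  obtain rfl | rfl : c = c' ∨ c' = c.inv := by
    rcases hc with rfl | rfl <;> rcases hc' with rfl | rfl <;> simp [Letter.inv]
  · have hab : ab (c :: (Dz s ++ [c])) = ab (Dz (s ++ [c])) := by
      rw [Dz_append, Dz_singleton, if_pos hc, ← List.singleton_append, ab_append, ab_append,
        ab_append, show [c, c] = [c] ++ [c] from rfl, ab_append]
      abel
    rw [hab, ne_eq, ab_Dz_eq_zero_iff]
    exact hsub (p ++ [c]) (s ++ [c]) t (by simp) (by simp) (.inl hp)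
  · have hab : ab (c :: (Dz s ++ [c.inv])) = ab (Dz s) := by
      rw [← List.singleton_append, ab_append, ab_append, add_left_comm,
        ab_singleton_add_ab_singleton_inv, add_zero]
    rw [hab, ne_eq, ab_Dz_eq_zero_iff]
    rcases eq_or_ne s [] with rfl | hs
    · exact absurd hred (not_reduced_append_cons_cons_inv p t c)
    · exact hsub (p ++ [c]) s (c.inv :: t) (by simp) hs (.inl hp)

/-- the z-doubling of a lattice knot is again a lattice knot. -/
theorem isKnot_Dz (w : List Letter) (h : IsKnot w) : IsKnot (Dz w) := by
  obtain ⟨hred, hab, hsub⟩ := isKnot_iff_forall_append.1 h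
  refine isKnot_iff_forall_append.2 ⟨reduced_Dz hred, ab_Dz_eq_zero_iff.2 hab, ?_⟩
  intro l m r hw hm hlr
  rw [List.append_assoc] at hw
  rcases Dz_eq_append hw with ⟨p, q, rfl, rfl, hq⟩ | ⟨p, q, c, hc, rfl, rfl, hq⟩
  · rcases Dz_eq_append hq.symm with ⟨s, t, rfl, rfl, rfl⟩ | ⟨s, t, c, hc, rfl, rfl, rfl⟩
    · rw [ne_eq, ab_Dz_eq_zero_iff]
      refine hsub p s t (List.append_assoc ..).symm (mt Dz_eq_nil_iff.2 hm) ?_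
      simpa [Dz_eq_nil_iff] using hlr
    · exact ab_Dz_append_singleton_ne_zero hc s
  · obtain ⟨m, rfl, hqm⟩ : ∃ m', m = c :: m' ∧ Dz q = m' ++ r := by
      simpa [hm] using List.append_eq_cons_iff.1 hq
    rcases Dz_eq_append hqm with ⟨s, t, rfl, rfl, rfl⟩ | ⟨s, t, c', hc', rfl, rfl, rfl⟩
    · exact ab_cons_Dz_ne_zero hc s
    · exact ab_cons_Dz_append_singleton_ne_zero h hc hc'
end

section
/- Under the hypotheses of the elevation lemma (layer n+1 of the lattice knot w is empty, and w' is the elevation of layer n by one), the n-th layer of w' is empty, the (n+1)-th layer of w' equals (as a sequence of non-z letters) the n-th layer of w, and all other layers of w' coincide with the corresponding layers of w. -/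
/-- Signed z-count of a word. -/
def zc (w : List Letter) : ℤ := (w.count .z : ℤ) - (w.count .zb : ℤ)

/-- z-height function: signed z-count of the prefix of length m. -/
def ht (w : List Letter) (m : ℕ) : ℤ := zc (w.take m)

/-- One step of free reduction (fold right). -/
def reduceStep (c : Letter) (acc : List Letter) : List Letter :=
  match acc with
  | [] => [c]
  | d :: rest => if d = c.inv then rest else c :: d :: rest

/-- Free reduction of a word to its reduced normal form. -/
def reduce (w : List Letter) : List Letter := w.foldr reduceStep []

/-- Auxiliary: the sequence of non-z letters of `w` lying at height `n`,
starting from height `h`. -/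
def layerAux (n : ℤ) : ℤ → List Letter → List Letter
  | _, [] => []
  | h, c :: rest =>
    if c = Letter.z then layerAux n (h + 1) rest
    else if c = Letter.zb then layerAux n (h - 1) rest
    else if h = n then c :: layerAux n h rest
    else layerAux n h rest

/-- The n-th layer of a word: the sequence of its non-z entries `w[m]` with
signed z-count of the prefix `w[1..m]` equal to `n`. -/
def layer (n : ℤ) (w : List Letter) : List Letter := layerAux n 0 w

/-- Auxiliary for elevation: conjugate each layer-n entry by `z·(-)·z̄`
(blockwise insertion agrees with this after free reduction). -/
def elevateAux (n : ℤ) : ℤ → List Letter → List Letter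
  | _, [] => []
  | h, c :: rest =>
    if c = Letter.z then c :: elevateAux n (h + 1) rest
    else if c = Letter.zb then c :: elevateAux n (h - 1) rest
    else if h = n then Letter.z :: c :: Letter.zb :: elevateAux n h rest
    else c :: elevateAux n h rest

/-- Elevation of the n-th layer by one, followed by free reduction. -/
def elevate (n : ℤ) (w : List Letter) : List Letter := reduce (elevateAux n 0 w)

/-- One elevation step applied to a layer with a vacant layer above. -/
def ElevStep (w w' : List Letter) : Prop :=
  ∃ n : ℤ, layer (n + 1) w = [] ∧ w' = elevate n w


section ElevDev

lemma letter_tri (c : Letter) : c = Letter.z ∨ c = Letter.zb ∨ (c ≠ Letter.z ∧ c ≠ Letter.zb) := by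
  cases c <;> simp

lemma inv_nz {c : Letter} (h1 : c ≠ Letter.z) (h2 : c ≠ Letter.zb) :
    c.inv ≠ Letter.z ∧ c.inv ≠ Letter.zb := by
  cases c <;> simp_all [Letter.inv]

@[simp] lemma inv_z : Letter.z.inv = Letter.zb := rfl
@[simp] lemma inv_zb : Letter.zb.inv = Letter.z := rfl

lemma reduce_cons (c : Letter) (l : List Letter) :
    reduce (c :: l) = reduceStep c (reduce l) := rfl

lemma reduceStep_eq_cons {c : Letter} {l : List Letter}
    (h : ∀ b, l.head? = some b → b ≠ c.inv) : reduceStep c l = c :: l := by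
  cases l with
  | nil => rfl
  | cons d r => simp [reduceStep, h d rfl]

lemma Reduced.tail {c : Letter} {t : List Letter} (h : Reduced (c :: t)) : Reduced t :=
  (List.isChain_cons.mp h).2

lemma Reduced.head {c : Letter} {t : List Letter} (h : Reduced (c :: t)) :
    ∀ b, t.head? = some b → b ≠ c.inv :=
  fun b hb => (List.isChain_cons.mp h).1 b hb

@[simp] lemma layerAux_nil (m h : ℤ) : layerAux m h [] = [] := rfl

lemma layerAux_z (m h : ℤ) (t : List Letter) :
    layerAux m h (Letter.z :: t) = layerAux m (h + 1) t := by simp [layerAux]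

lemma layerAux_zb (m h : ℤ) (t : List Letter) :
    layerAux m h (Letter.zb :: t) = layerAux m (h - 1) t := by simp [layerAux]

lemma layerAux_nz (m h : ℤ) {c : Letter} (t : List Letter)
    (h1 : c ≠ Letter.z) (h2 : c ≠ Letter.zb) :
    layerAux m h (c :: t) = if h = m then c :: layerAux m h t else layerAux m h t := by
  simp [layerAux, h1, h2]

lemma elevateAux_z (n h : ℤ) (t : List Letter) :
    elevateAux n h (Letter.z :: t) = Letter.z :: elevateAux n (h + 1) t := by simp [elevateAux]

lemma elevateAux_zb (n h : ℤ) (t : List Letter) :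
    elevateAux n h (Letter.zb :: t) = Letter.zb :: elevateAux n (h - 1) t := by simp [elevateAux]

lemma elevateAux_nz (n h : ℤ) {c : Letter} (t : List Letter)
    (h1 : c ≠ Letter.z) (h2 : c ≠ Letter.zb) :
    elevateAux n h (c :: t) =
      if h = n then Letter.z :: c :: Letter.zb :: elevateAux n h t
      else c :: elevateAux n h t := by
  simp [elevateAux, h1, h2]

/-- Explicit reduced form of the elevated word. -/
def Dl (n : ℤ) : ℤ → List Letter → List Letter
  | _, [] => []
  | h, c :: t =>
    if c = Letter.z then Letter.z :: Dl n (h + 1) t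
    else if c = Letter.zb then
      if h = n + 1 then reduceStep Letter.zb (Dl n n t)
      else Letter.zb :: Dl n (h - 1) t
    else if h = n then Letter.z :: c :: reduceStep Letter.zb (Dl n n t)
    else c :: Dl n h t

@[simp] lemma Dl_nil (n h : ℤ) : Dl n h [] = [] := rfl

lemma Dl_z (n h : ℤ) (t : List Letter) :
    Dl n h (Letter.z :: t) = Letter.z :: Dl n (h + 1) t := by simp [Dl]

lemma Dl_zb (n h : ℤ) (t : List Letter) :
    Dl n h (Letter.zb :: t) =
      if h = n + 1 then reduceStep Letter.zb (Dl n n t)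
      else Letter.zb :: Dl n (h - 1) t := by simp [Dl]

lemma Dl_nz (n h : ℤ) {c : Letter} (t : List Letter)
    (h1 : c ≠ Letter.z) (h2 : c ≠ Letter.zb) :
    Dl n h (c :: t) =
      if h = n then Letter.z :: c :: reduceStep Letter.zb (Dl n n t)
      else c :: Dl n h t := by
  simp [Dl, h1, h2]

lemma layerAux_reduceStep_zb (n k : ℤ) (u : List Letter) :
    layerAux k (n + 1) (reduceStep Letter.zb u) = layerAux k n u := by
  cases u with
  | nil => simp [reduceStep, layerAux_zb]
  | cons d r =>
    by_cases hd : d = Letter.z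
    · subst hd
      simp [reduceStep, layerAux_z]
    · rw [show reduceStep Letter.zb (d :: r) = Letter.zb :: d :: r by simp [reduceStep, hd],
        layerAux_zb]
      simp

/-- Layers of `Dl`. -/
lemma layerAux_Dl (n : ℤ) : ∀ (w : List Letter) (h : ℤ),
    layerAux (n + 1) h w = [] → ∀ k : ℤ,
    layerAux k h (Dl n h w) =
      if k = n then [] else if k = n + 1 then layerAux n h w else layerAux k h w := by
  intro w
  induction w with
  | nil => intro h _ k; simp only [Dl_nil, layerAux_nil]; split_ifs <;> rfl
  | cons c t ih =>
    intro h hvac k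
    rcases letter_tri c with hc | hc | ⟨hc1, hc2⟩
    · subst hc
      rw [layerAux_z] at hvac
      rw [Dl_z, layerAux_z]
      simp only [layerAux_z]
      exact ih (h + 1) hvac k
    · subst hc
      rw [layerAux_zb] at hvac
      by_cases hh : h = n + 1
      · subst hh
        have hvac' : layerAux (n + 1) n t = [] := by
          simpa using hvac
        rw [Dl_zb, if_pos rfl, layerAux_reduceStep_zb]
        simp only [layerAux_zb, add_sub_cancel_right]
        exact ih n hvac' k
      · rw [Dl_zb, if_neg hh, layerAux_zb]
        simp only [layerAux_zb]
        exact ih (h - 1) hvac k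
    · rw [layerAux_nz _ _ _ hc1 hc2] at hvac
      have hh1 : h ≠ n + 1 := by
        intro hcontra
        rw [if_pos hcontra] at hvac
        exact (List.cons_ne_nil _ _) hvac
      have hvac' : layerAux (n + 1) h t = [] := by
        rwa [if_neg hh1] at hvac
      by_cases hn : h = n
      · have hn' : n = h := hn.symm
        subst hn'
        rw [Dl_nz _ _ _ hc1 hc2, if_pos rfl, layerAux_z,
          layerAux_nz _ _ _ hc1 hc2, layerAux_reduceStep_zb, ih n hvac' k]
        simp only [layerAux_nz _ _ _ hc1 hc2]
        split_ifs <;> first | rfl | omega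
      · rw [Dl_nz _ _ _ hc1 hc2, if_neg hn, layerAux_nz _ _ _ hc1 hc2, ih h hvac' k]
        simp only [layerAux_nz _ _ _ hc1 hc2]
        split_ifs <;> first | rfl | omega

/-- Head information for `Dl` on reduced words with vacant layer `n+1`. -/
lemma Dl_head (n : ℤ) : ∀ (w : List Letter) (h : ℤ), Reduced w →
    layerAux (n + 1) h w = [] →
    ((Dl n h w).head? = some Letter.zb → w.head? = some Letter.zb) ∧
    ((Dl n h w).head? = some Letter.z →
       w.head? = some Letter.z ∨
         (h = n ∧ ∃ c t, w = c :: t ∧ c ≠ Letter.z ∧ c ≠ Letter.zb)) ∧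
    (∀ a, a ≠ Letter.z → a ≠ Letter.zb → (Dl n h w).head? = some a →
       w.head? = some a ∨ (h = n + 1 ∧ ∃ t, w = Letter.zb :: a :: t)) ∧
    (∀ v a, Dl n h w = Letter.z :: v → v.head? = some a → a ≠ Letter.z → a ≠ Letter.zb →
       (∃ t, w = a :: t) ∨ (∃ t, w = Letter.z :: a :: t)) := by
  intro w
  induction w with
  | nil => intro h _ _; simp
  | cons c t ih =>
    intro h hr hvac
    have hrt : Reduced t := hr.tail
    rcases letter_tri c with hc | hc | ⟨hc1, hc2⟩
    · -- c = z
      subst hc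
      rw [layerAux_z] at hvac
      obtain ⟨ih1, ih2, ih3, ih4⟩ := ih (h + 1) hrt hvac
      rw [Dl_z]
      refine ⟨by simp, by simp, ?_, ?_⟩
      · intro a ha1 _ hEq
        simp at hEq
        exact absurd hEq.symm ha1
      · intro v a hD hv ha1 ha2
        have hv' : v = Dl n (h + 1) t := by
          injection hD with _ h2
          exact h2.symm
        rw [hv'] at hv
        rcases ih3 a ha1 ha2 hv with hcase | ⟨_, t', ht'⟩
        · cases t with
          | nil => simp at hcase
          | cons b t'' =>
            simp at hcase
            subst hcase
            exact Or.inr ⟨t'', rfl⟩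
        · -- t = zb :: a :: t' : contradicts reducedness of z :: t
          exfalso
          subst ht'
          exact (hr.head Letter.zb rfl) rfl
    · -- c = zb
      subst hc
      rw [layerAux_zb] at hvac
      by_cases hh : h = n + 1
      · subst hh
        have hvac' : layerAux (n + 1) n t = [] := by simpa using hvac
        rw [Dl_zb, if_pos rfl]
        cases t with
        | nil =>
          refine ⟨by simp [reduceStep], by simp [reduceStep], ?_, ?_⟩
          · intro a _ ha2 hEq
            simp [reduceStep] at hEq
            exact absurd hEq.symm ha2
          · intro v a hD _ _ _
            simp [reduceStep] at hD
        | cons d t' =>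
          rcases letter_tri d with hd | hd | ⟨hd1, hd2⟩
          · subst hd
            exact absurd rfl (hr.head Letter.z rfl)
          · subst hd
            have hne : (n : ℤ) ≠ n + 1 := by omega
            rw [Dl_zb, if_neg hne]
            rw [show reduceStep Letter.zb (Letter.zb :: Dl n (n - 1) t') =
                Letter.zb :: Letter.zb :: Dl n (n - 1) t' by simp [reduceStep]]
            refine ⟨by simp, by simp, ?_, ?_⟩
            · intro a _ ha2 hEq
              simp at hEq
              exact absurd hEq.symm ha2
            · intro v a hD _ _ _
              simp at hD
          · rw [Dl_nz _ _ _ hd1 hd2, if_pos rfl]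
            rw [show reduceStep Letter.zb
                  (Letter.z :: d :: reduceStep Letter.zb (Dl n n t')) =
                d :: reduceStep Letter.zb (Dl n n t') by simp [reduceStep]]
            refine ⟨?_, ?_, ?_, ?_⟩
            · intro hEq; simp at hEq; exact absurd hEq hd2
            · intro hEq; simp at hEq; exact absurd hEq hd1
            · intro a _ _ hEq
              simp at hEq
              subst hEq
              exact Or.inr ⟨rfl, t', rfl⟩
            · intro v a hD _ _ _
              rw [List.cons_eq_cons] at hD
              exact absurd hD.1 hd1
      · rw [Dl_zb, if_neg hh]
        refine ⟨by simp, by simp, ?_, ?_⟩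
        · intro a _ ha2 hEq
          simp at hEq
          exact absurd hEq.symm ha2
        · intro v a hD _ _ _
          rw [List.cons_eq_cons] at hD
          simp at hD
    · -- c non-z
      rw [layerAux_nz _ _ _ hc1 hc2] at hvac
      have hh1 : h ≠ n + 1 := by
        intro hcontra
        rw [if_pos hcontra] at hvac
        exact (List.cons_ne_nil _ _) hvac
      have hvac' : layerAux (n + 1) h t = [] := by rwa [if_neg hh1] at hvac
      by_cases hn : h = n
      · have hn' : n = h := hn.symm
        subst hn'
        rw [Dl_nz _ _ _ hc1 hc2, if_pos rfl]
        refine ⟨by simp, ?_, ?_, ?_⟩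
        · intro _
          exact Or.inr ⟨rfl, c, t, rfl, hc1, hc2⟩
        · intro a ha1 _ hEq
          simp at hEq
          exact absurd hEq.symm ha1
        · intro v a hD hv _ _
          have hv' : v = c :: reduceStep Letter.zb (Dl n n t) := by
            injection hD with _ h2
            exact h2.symm
          rw [hv'] at hv
          simp at hv
          subst hv
          exact Or.inl ⟨t, rfl⟩
      · rw [Dl_nz _ _ _ hc1 hc2, if_neg hn]
        refine ⟨?_, ?_, ?_, ?_⟩
        · intro hEq; simp at hEq; exact absurd hEq hc2
        · intro hEq; simp at hEq; exact absurd hEq hc1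
        · intro a _ _ hEq
          simp at hEq
          subst hEq
          exact Or.inl rfl
        · intro v a hD _ _ _
          rw [List.cons_eq_cons] at hD
          exact absurd hD.1 hc1

/-- The free reduction of the elevated word equals `Dl`. -/
lemma reduce_elevateAux (n : ℤ) : ∀ (w : List Letter) (h : ℤ), Reduced w →
    layerAux (n + 1) h w = [] →
    reduce (elevateAux n h w) = Dl n h w := by
  intro w
  induction w with
  | nil => intro h _ _; rfl
  | cons c t ih =>
    intro h hr hvac
    have hrt : Reduced t := hr.tail
    rcases letter_tri c with hc | hc | ⟨hc1, hc2⟩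
    · -- c = z
      subst hc
      rw [layerAux_z] at hvac
      rw [elevateAux_z, reduce_cons, ih (h + 1) hrt hvac, Dl_z]
      apply reduceStep_eq_cons
      intro b hb hbz
      rw [inv_z] at hbz
      subst hbz
      have := (Dl_head n t (h + 1) hrt hvac).1 hb
      exact (hr.head Letter.zb this) rfl
    · -- c = zb
      subst hc
      rw [layerAux_zb] at hvac
      rw [elevateAux_zb, reduce_cons, ih (h - 1) hrt hvac, Dl_zb]
      by_cases hh : h = n + 1
      · subst hh
        rw [if_pos rfl]
        simp only [add_sub_cancel_right]
      · rw [if_neg hh]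
        apply reduceStep_eq_cons
        intro b hb hbz
        rw [inv_zb] at hbz
        subst hbz
        rcases (Dl_head n t (h - 1) hrt hvac).2.1 hb with hcase | ⟨hcase, _⟩
        · exact (hr.head Letter.z hcase) rfl
        · omega
    · -- c non-z
      rw [layerAux_nz _ _ _ hc1 hc2] at hvac
      have hh1 : h ≠ n + 1 := by
        intro hcontra
        rw [if_pos hcontra] at hvac
        exact (List.cons_ne_nil _ _) hvac
      have hvac' : layerAux (n + 1) h t = [] := by rwa [if_neg hh1] at hvac
      obtain ⟨hcinv1, hcinv2⟩ := inv_nz hc1 hc2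
      by_cases hn : h = n
      · have hn' : n = h := hn.symm
        subst hn'
        rw [elevateAux_nz _ _ _ hc1 hc2, if_pos rfl, reduce_cons, reduce_cons, reduce_cons,
          ih n hrt hvac', Dl_nz _ _ _ hc1 hc2, if_pos rfl]
        have hstep : ∀ b, (reduceStep Letter.zb (Dl n n t)).head? = some b → b ≠ c.inv := by
          intro b hb hbc
          subst hbc
          rcases hu : Dl n n t with _ | ⟨d, r⟩
          · rw [hu] at hb
            simp [reduceStep] at hb
            exact hcinv2 hb.symm
          · by_cases hd : d = Letter.z
            · subst hd
              rw [hu] at hb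
              rw [show reduceStep Letter.zb (Letter.z :: r) = r by simp [reduceStep]] at hb
              rcases (Dl_head n t n hrt hvac').2.2.2 r c.inv hu hb hcinv1 hcinv2 with
                ⟨t', ht'⟩ | ⟨t', ht'⟩
              · subst ht'
                exact (hr.head c.inv rfl) rfl
              · subst ht'
                rw [layerAux_z, layerAux_nz _ _ _ hcinv1 hcinv2, if_pos rfl] at hvac'
                exact (List.cons_ne_nil _ _) hvac'
            · rw [hu] at hb
              rw [show reduceStep Letter.zb (d :: r) = Letter.zb :: d :: r by
                simp [reduceStep, hd]] at hb
              simp at hb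
              exact hcinv2 hb.symm
        rw [reduceStep_eq_cons hstep]
        apply reduceStep_eq_cons
        intro b hb hbz
        simp at hb
        exact hc2 (hb.trans hbz)
      · rw [elevateAux_nz _ _ _ hc1 hc2, if_neg hn, reduce_cons, ih h hrt hvac',
          Dl_nz _ _ _ hc1 hc2, if_neg hn]
        apply reduceStep_eq_cons
        intro b hb hbc
        subst hbc
        rcases (Dl_head n t h hrt hvac').2.2.1 c.inv hcinv1 hcinv2 hb with hcase | ⟨hcase, _⟩
        · exact (hr.head c.inv hcase) rfl
        · exact hh1 hcase

end ElevDev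

/-- elevation lemma, second part: after elevating layer n of a
lattice knot `w` with vacant layer n+1, layer n becomes empty, layer n+1 equals
the old layer n, and all other layers are unchanged. -/
theorem layers_of_elevate (w : List Letter) (n : ℤ) (hw : IsKnot w)
    (hvac : layer (n + 1) w = []) :
    layer n (elevate n w) = [] ∧
    layer (n + 1) (elevate n w) = layer n w ∧
    ∀ k : ℤ, k ≠ n → k ≠ n + 1 → layer k (elevate n w) = layer k w := by 
  have hred : Reduced w := hw.1
  have hvac0 : layerAux (n + 1) 0 w = [] := hvac
  have key : elevate n w = Dl n 0 w := reduce_elevateAux n w 0 hred hvac0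
  have hL := layerAux_Dl n w 0 hvac0
  refine ⟨?_, ?_, ?_⟩
  · show layerAux n 0 (elevate n w) = []
    rw [key, hL n, if_pos rfl]
  · show layerAux (n + 1) 0 (elevate n w) = layerAux n 0 w
    rw [key, hL (n + 1), if_neg (by omega), if_pos rfl]
  · intro k hk1 hk2
    show layerAux k 0 (elevate n w) = layerAux k 0 w
    rw [key, hL k, if_neg hk1, if_neg hk2]
end
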